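/- The sequence T = (0̲ ∩ 1̲)^∞ is a fixed point of the substitution σ : 0 ↦ 0101, 1 ↦ 1101, read off starting at position 1: if σ(T) denotes the sequence obtained by replacing each letter T(n) (concatenated in order, with the image of T(1) beginning at position 1) by its 4-letter image, then σ(T) = T. Equivalently, for all n ∈ ℤ: T(4n - 3) = T(n), T(4n - 2) = 1, T(4n - 1) = 0, T(4n) = 1. -/

import Mathlib

/-- Superposition: `(A ∩ B)(2n) = B n`, `(A ∩ B)(2n-1) = A n`. -/
def cap {α : Type*} (A B : ℤ → α) : ℤ → α :=
  fun v => if v % 2 = 0 then B (v / 2) else A ((v + 1) / 2)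

/-- `W m = (0̲ ∩ 1̲)^m` for `m ≥ 1`. -/
def W : ℕ → ℤ → Fin 2
  | 0 => fun _ => 0
  | 1 => cap (fun _ => 0) (fun _ => 1)
  | (m + 2) => cap (cap (W (m + 1)) (fun _ => 0)) (fun _ => 1)

/-!
`W (m + 2) = (W (m + 1) ∩ 0̲) ∩ 1̲`, so unfolding the two superpositions at the positions
`4n - 3, 4n - 2, 4n - 1, 4n` shows that `W (m + 2)` is the image of `W (m + 1)` under
`0 ↦ 0101`, `1 ↦ 1101`. Since `T` agrees with every `W m` for `m` large, the same identities
hold for `T`.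
-/

open Filter

section cap

variable {α : Type*} (A B : ℤ → α) (n : ℤ)

theorem cap_two_mul : cap A B (2 * n) = B n := by
  simp [cap]

theorem cap_two_mul_sub_one : cap A B (2 * n - 1) = A n := by
  have hodd : (2 * n - 1) % 2 ≠ 0 := by omega
  have hhalf : (2 * n - 1 + 1) / 2 = n := by omega
  simp only [cap, hodd, hhalf, if_false]

end cap

theorem W_add_two_substitution (m : ℕ) (n : ℤ) :
    W (m + 2) (4 * n - 3) = W (m + 1) n ∧ W (m + 2) (4 * n - 2) = 1 ∧
      W (m + 2) (4 * n - 1) = 0 ∧ W (m + 2) (4 * n) = 1 := by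
  have h3 : 4 * n - 3 = 2 * (2 * n - 1) - 1 := by ring
  have h2 : 4 * n - 2 = 2 * (2 * n - 1) := by ring
  have h1 : 4 * n - 1 = 2 * (2 * n) - 1 := by ring
  have h0 : 4 * n = 2 * (2 * n) := by ring
  rw [h3, h2, h1, h0]
  simp only [W, cap_two_mul, cap_two_mul_sub_one, and_self]

theorem eq_of_eventually_eq_of_eventually_eq {α : Type*} {s : ℕ → α} {a b : α}
    (ha : ∀ᶠ m in atTop, s m = a) (hb : ∀ᶠ m in atTop, s m = b) : a = b := by
  obtain ⟨m, hma, hmb⟩ := (ha.and hb).exists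
  exact hma.symm.trans hmb

/-- The limit `T = (0̲ ∩ 1̲)^∞` is a fixed point of the substitution
`0 ↦ 0101`, `1 ↦ 1101`: `T(4n-3) = T n`, `T(4n-2) = 1`, `T(4n-1) = 0`, `T(4n) = 1`. -/
theorem stmt_15 (T : ℤ → Fin 2)
    (hT : ∀ v : ℤ, ∃ M : ℕ, ∀ m : ℕ, M ≤ m → W m v = T v) :
    ∀ n : ℤ, T (4 * n - 3) = T n ∧ T (4 * n - 2) = 1 ∧
      T (4 * n - 1) = 0 ∧ T (4 * n) = 1 := by
  have hlim (k : ℕ) (v : ℤ) : ∀ᶠ m in atTop, W (m + k) v = T v :=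
    (tendsto_add_atTop_nat k).eventually (eventually_atTop.2 (hT v))
  intro n
  have hsub := Eventually.of_forall (f := atTop) (W_add_two_substitution · n)
  refine ⟨?_, ?_, ?_, ?_⟩
  · refine eq_of_eventually_eq_of_eventually_eq (hlim 2 _) ?_
    filter_upwards [hsub, hlim 1 n] with m hm hn
    exact hm.1.trans hn
  · exact eq_of_eventually_eq_of_eventually_eq (hlim 2 _) (hsub.mono fun _ hm => hm.2.1)
  · exact eq_of_eventually_eq_of_eventually_eq (hlim 2 _) (hsub.mono fun _ hm => hm.2.2.1)
  · exact eq_of_eventually_eq_of_eventually_eq (hlim 2 _) (hsub.mono fun _ hm => hm.2.2.2)
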